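/- Let k ≥ 1, let a : ℕ → ℂ be a k-periodic sequence, let x : ℕ → ℂ satisfy x_{n+2} = a_n x_{n+1} + x_n for all n ≥ 0, and let C_k be the monodromy matrix. Suppose there is an invertible 2×2 complex matrix J such that C_k = J · [[−1, 1], [0, −1]] · J⁻¹ (the Jordan form for a double eigenvalue −1). Then for every n ≥ 0: x_{nk} = (−1)ⁿ [ (J_{2,1}(J⁻¹)_{1,1} + (−n J_{2,1} + J_{2,2})(J⁻¹)_{2,1}) x_1 + (J_{2,1}(J⁻¹)_{1,2} + (−n J_{2,1} + J_{2,2})(J⁻¹)_{2,2}) x_0 ], and x_{nk+1} = (−1)ⁿ [ (J_{1,1}(J⁻¹)_{1,1} + (−n J_{1,1} + J_{1,2})(J⁻¹)_{2,1}) x_1 + (J_{1,1}(J⁻¹)_{1,2} + (−n J_{1,1} + J_{1,2})(J⁻¹)_{2,2}) x_0 ]. -/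

import Mathlib

/-- The `i`-th Fibonacci matrix. -/
def fibMat (a : ℕ → ℂ) (i : ℕ) : Matrix (Fin 2) (Fin 2) ℂ :=
  !![a i, 1; 1, 0]

/-- The product `C n = A_{n-1} ⋯ A_1 A_0` of Fibonacci matrices. -/
noncomputable def fibProd (a : ℕ → ℂ) : ℕ → Matrix (Fin 2) (Fin 2) ℂ
  | 0 => 1
  | n + 1 => fibMat a n * fibProd a n

open Matrix

/-!
The monodromy matrix advances the state vector `(x_{m+1}, x_m)` of a solution by one period, so
`(x_{nk+1}, x_{nk}) = C_k ^ n (x_1, x_0)`. Writing `C_k = J B J⁻¹` with `B = -(1 - N)`, `N` nilpotent,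
gives `C_k ^ n = (-1) ^ n J (1 - n N) J⁻¹`, and the two formulas are the two rows of this.
-/

lemma fibProd_mulVec_eq (a x : ℕ → ℂ) (hx : ∀ n, x (n + 2) = a n * x (n + 1) + x n) (m : ℕ) :
    fibProd a m *ᵥ ![x 1, x 0] = ![x (m + 1), x m] := by
  induction m with
  | zero => simp [fibProd]
  | succ m ih =>
    rw [fibProd, ← mulVec_mulVec, ih, hx]
    ext i
    fin_cases i <;> simp [fibMat, mulVec, dotProduct, Fin.sum_univ_two]

lemma fibProd_add (a : ℕ → ℂ) (m j : ℕ) :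
    fibProd a (m + j) = fibProd (fun i => a (i + m)) j * fibProd a m := by
  induction j with
  | zero => simp [fibProd]
  | succ j ih =>
    rw [← Nat.add_assoc, fibProd, ih, fibProd, mul_assoc]
    simp [fibMat, Nat.add_comm]

lemma fibProd_mul_eq_pow_of_periodic {a : ℕ → ℂ} {k : ℕ} (ha : Function.Periodic a k) (n : ℕ) :
    fibProd a (n * k) = fibProd a k ^ n := by
  induction n with
  | zero => simp [fibProd]
  | succ n ih =>
    have hshift : (fun i => a (i + n * k)) = a := funext (by exact_mod_cast ha.nat_mul n)
    rw [Nat.succ_mul, fibProd_add, hshift, ih, pow_succ']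

lemma jordan_neg_one_pow (n : ℕ) :
    (!![-1, 1; 0, -1] : Matrix (Fin 2) (Fin 2) ℂ) ^ n = (-1 : ℂ) ^ n • !![1, -(n : ℂ); 0, 1] := by
  induction n with
  | zero => simp [one_fin_two]
  | succ n ih =>
    rw [pow_succ, ih, pow_succ]
    ext i j
    fin_cases i <;> fin_cases j <;> simp [mul_apply, Fin.sum_univ_two]
    ring

lemma Matrix.conj_pow_of_isUnit_det {n : Type*} [Fintype n] [DecidableEq n] {R : Type*} [CommRing R]
    {J : Matrix n n R} (hJ : IsUnit J.det) (B : Matrix n n R) (m : ℕ) :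
    (J * B * J⁻¹) ^ m = J * B ^ m * J⁻¹ :=
  Units.conj_pow (J.nonsingInvUnit hJ) B m

theorem binet_formula_jordan_neg_one_general (k : ℕ) (a : ℕ → ℂ)
    (ha : ∀ n, a (n + k) = a n) (x : ℕ → ℂ)
    (hx : ∀ n, x (n + 2) = a n * x (n + 1) + x n)
    (J : Matrix (Fin 2) (Fin 2) ℂ) (hJ : IsUnit J.det)
    (hC : fibProd a k = J * !![-1, 1; 0, -1] * J⁻¹) (n : ℕ) :
    x (n * k) =
      (-1 : ℂ) ^ n *
        ((J 1 0 * J⁻¹ 0 0 + (-(n : ℂ) * J 1 0 + J 1 1) * J⁻¹ 1 0) * x 1 +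
         (J 1 0 * J⁻¹ 0 1 + (-(n : ℂ) * J 1 0 + J 1 1) * J⁻¹ 1 1) * x 0) ∧
    x (n * k + 1) =
      (-1 : ℂ) ^ n *
        ((J 0 0 * J⁻¹ 0 0 + (-(n : ℂ) * J 0 0 + J 0 1) * J⁻¹ 1 0) * x 1 +
         (J 0 0 * J⁻¹ 0 1 + (-(n : ℂ) * J 0 0 + J 0 1) * J⁻¹ 1 1) * x 0) := by
  have hpow : fibProd a (n * k) = J * ((-1 : ℂ) ^ n • !![1, -(n : ℂ); 0, 1]) * J⁻¹ := by
    rw [fibProd_mul_eq_pow_of_periodic ha, hC, conj_pow_of_isUnit_det hJ, jordan_neg_one_pow]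
  have hstate := fibProd_mulVec_eq a x hx (n * k)
  rw [hpow] at hstate
  have hrow0 := congrFun hstate 0
  have hrow1 := congrFun hstate 1
  simp only [mulVec, dotProduct, smul_of, smul_cons, smul_eq_mul, mul_one, mul_neg, smul_empty,
    mul_zero, Fin.isValue, mul_apply, of_apply, cons_val', cons_val_fin_one, Fin.sum_univ_two,
    cons_val_zero, cons_val_one, add_zero] at hrow0 hrow1
  constructor
  · rw [← hrow1]; ring
  · rw [← hrow0]; ring

theorem binet_formula_jordan_neg_one (k : ℕ) (hk : 1 ≤ k) (a : ℕ → ℂ)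
    (ha : ∀ n, a (n + k) = a n) (x : ℕ → ℂ)
    (hx : ∀ n, x (n + 2) = a n * x (n + 1) + x n)
    (J : Matrix (Fin 2) (Fin 2) ℂ) (hJ : IsUnit J.det)
    (hC : fibProd a k = J * !![-1, 1; 0, -1] * J⁻¹) (n : ℕ) :
    x (n * k) =
      (-1 : ℂ) ^ n *
        ((J 1 0 * J⁻¹ 0 0 + (-(n : ℂ) * J 1 0 + J 1 1) * J⁻¹ 1 0) * x 1 +
         (J 1 0 * J⁻¹ 0 1 + (-(n : ℂ) * J 1 0 + J 1 1) * J⁻¹ 1 1) * x 0) ∧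
    x (n * k + 1) =
      (-1 : ℂ) ^ n *
        ((J 0 0 * J⁻¹ 0 0 + (-(n : ℂ) * J 0 0 + J 0 1) * J⁻¹ 1 0) * x 1 +
         (J 0 0 * J⁻¹ 0 1 + (-(n : ℂ) * J 0 0 + J 0 1) * J⁻¹ 1 1) * x 0) :=
  binet_formula_jordan_neg_one_general k a ha x hx J hJ hC n
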